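/- arXiv:2403.14052 — 4 statements merged into one kernel-verified Lean document; each statement's English description precedes it below -/
import Mathlib

section
/- Let p > 1 and q ≥ 0, and let W : [0,1] → ℝ be a C¹ function with W continuous, W > 0 on (0,1), W symmetric about 1/2 (W(x) = W(1-x) for all x ∈ [0,1]), W(0)=W(1)=0, W strictly increasing on [0,1/2], W(1/2) = ξ > 0, and W'(x) = sqrt((2/(p+1))·(ξ^{p+1} - W(x)^{p+1})) on [0,1/2]. Then ∫₀¹ W(x)^q dx = 2·sqrt((p+1)/2)·ξ^{(2q-p+1)/2}·∫₀¹ s^q / sqrt(1 - s^{p+1}) ds. -/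
/-!
By the symmetry `W x = W (1 - x)` the integral is twice the integral over `[0, 1/2]`. There `W`
increases from `0` to `ξ` and solves the autonomous equation `W' = V(W)`, with
`V(u) = √((2/(p+1)) (ξ^(p+1) - u^(p+1)))` positive below `ξ`, so the substitution `u = W x`,
`dx = du / V(u)` turns `∫ W^q` into `∫₀^ξ u^q / V(u) du`. Rescaling `u = ξ s` then gives
`√((p+1)/2) ξ^((2q-p+1)/2) L_{p,q}`.
-/

open Set MeasureTheory intervalIntegral

theorem intervalIntegral_eq_two_smul_of_symm {E : Type*} [NormedAddCommGroup E] [NormedSpace ℝ E]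
    {f : ℝ → E} {a b : ℝ} (hf : IntervalIntegrable f volume a b)
    (hsym : ∀ x ∈ uIcc a b, f x = f (a + b - x)) :
    ∫ x in a..b, f x = (2:ℝ) • ∫ x in a..(a + b) / 2, f x := by
  have hmid : (a + b) / 2 ∈ uIcc a b := by
    rcases le_total a b with h | h
    · rw [uIcc_of_le h]; constructor <;> linarith
    · rw [uIcc_of_ge h]; constructor <;> linarith
  have hreflect : ∫ x in (a + b) / 2..b, f x = ∫ x in a..(a + b) / 2, f x := by
    rw [integral_congr (fun x hx => hsym x (uIcc_subset_uIcc hmid right_mem_uIcc hx)),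
      integral_comp_sub_left (fun x => f x) (a + b)]
    congr 1 <;> ring
  rw [← integral_add_adjacent_intervals (hf.mono_set (uIcc_subset_uIcc left_mem_uIcc hmid))
    (hf.mono_set (uIcc_subset_uIcc hmid right_mem_uIcc)), hreflect, two_smul]

theorem integral_comp_eq_integral_inv_smul_of_hasDerivAt {F : Type*} [NormedAddCommGroup F]
    [NormedSpace ℝ F] {W V : ℝ → ℝ} {a b : ℝ} (hab : a ≤ b) (hW : ContinuousOn W (Icc a b))
    (hmono : StrictMonoOn W (Icc a b)) (hderiv : ∀ x ∈ Ioo a b, HasDerivAt W (V (W x)) x)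
    (hV : ∀ x ∈ Ioo a b, 0 < V (W x)) (g : ℝ → F) :
    ∫ x in a..b, g (W x) = ∫ u in W a..W b, (V u)⁻¹ • g u := by
  have himage : W '' Ioo a b = Ioo (W a) (W b) :=
    hmono.image_Ioo_subset.antisymm (intermediate_value_Ioo hab hW)
  have hWab : W a ≤ W b := hmono.monotoneOn (left_mem_Icc.2 hab) (right_mem_Icc.2 hab) hab
  rw [integral_of_le hab, integral_of_le hWab, integral_Ioc_eq_integral_Ioo,
    integral_Ioc_eq_integral_Ioo, ← himage,
    integral_image_eq_integral_abs_deriv_smul measurableSet_Ioo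
      (fun x hx => (hderiv x hx).hasDerivWithinAt) (hmono.injOn.mono Ioo_subset_Icc_self)]
  refine setIntegral_congr_fun measurableSet_Ioo fun x hx => ?_
  rw [abs_of_pos (hV x hx), smul_smul, mul_inv_cancel₀ (hV x hx).ne', one_smul]

theorem integral_inv_sqrt_sub_rpow_mul_rpow {p : ℝ} (hp : 0 < p + 1) (q : ℝ) {ξ : ℝ} (hξ : 0 < ξ) :
    ∫ u in (0:ℝ)..ξ, (Real.sqrt ((2 / (p + 1)) * (ξ ^ (p + 1) - u ^ (p + 1))))⁻¹ * u ^ q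
      = Real.sqrt ((p + 1) / 2) * ξ ^ ((2 * q - p + 1) / 2)
        * ∫ s in (0:ℝ)..1, s ^ q / Real.sqrt (1 - s ^ (p + 1)) := by
  have hexp : ξ * ξ ^ q = ξ ^ ((2 * q - p + 1) / 2) * Real.sqrt (ξ ^ (p + 1)) := by
    have hξq : ξ * ξ ^ q = ξ ^ (1 + q) := by rw [Real.rpow_add hξ, Real.rpow_one]
    rw [hξq, Real.sqrt_eq_rpow, ← Real.rpow_mul hξ.le, ← Real.rpow_add hξ]
    ring_nf
  -- At `s = 1` both sides are `0`, by the conventions `0⁻¹ = 0` and `x / 0 = 0`.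
  have hpointwise : ∀ s ∈ uIcc (0:ℝ) 1,
      ξ * ((Real.sqrt ((2 / (p + 1)) * (ξ ^ (p + 1) - (ξ * s) ^ (p + 1))))⁻¹ * (ξ * s) ^ q)
        = Real.sqrt ((p + 1) / 2) * ξ ^ ((2 * q - p + 1) / 2)
          * (s ^ q / Real.sqrt (1 - s ^ (p + 1))) := by
    intro s hs
    rw [uIcc_of_le zero_le_one] at hs
    have hs1 : 0 ≤ 1 - s ^ (p + 1) := sub_nonneg.2 (Real.rpow_le_one hs.1 hs.2 hp.le)
    rw [Real.mul_rpow hξ.le hs.1, Real.mul_rpow hξ.le hs.1,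
      show ξ ^ (p + 1) - ξ ^ (p + 1) * s ^ (p + 1) = ξ ^ (p + 1) * (1 - s ^ (p + 1)) by ring,
      Real.sqrt_mul (by positivity), Real.sqrt_mul (by positivity), mul_inv, mul_inv,
      ← Real.sqrt_inv, inv_div]
    calc _ = Real.sqrt ((p + 1) / 2) * ((ξ * ξ ^ q) * (Real.sqrt (ξ ^ (p + 1)))⁻¹)
          * (s ^ q / Real.sqrt (1 - s ^ (p + 1))) := by ring
      _ = _ := by rw [hexp, mul_inv_cancel_right₀ (Real.sqrt_pos.2 (by positivity)).ne']
  have hscale := smul_integral_comp_mul_left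
    (fun u => (Real.sqrt ((2 / (p + 1)) * (ξ ^ (p + 1) - u ^ (p + 1))))⁻¹ * u ^ q) ξ
    (a := 0) (b := 1)
  rw [mul_zero, mul_one] at hscale
  rw [← hscale, smul_eq_mul, ← intervalIntegral.integral_const_mul,
    ← intervalIntegral.integral_const_mul]
  exact integral_congr hpointwise

theorem stmt2_general (p q : ℝ) (hp : 1 < p) (hq : 0 ≤ q) (W : ℝ → ℝ) (ξ : ℝ)
    (hW : ContDiffOn ℝ 1 W (Set.Icc 0 1))
    (hsym : ∀ x ∈ Set.Icc (0:ℝ) 1, W x = W (1 - x))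
    (h0 : W 0 = 0)
    (hmono : StrictMonoOn W (Set.Icc 0 (1/2)))
    (hmax : W (1/2) = ξ)
    (hd : ∀ x ∈ Set.Icc (0:ℝ) (1/2),
      deriv W x = Real.sqrt ((2/(p+1)) * (ξ ^ (p+1) - W x ^ (p+1)))) :
    ∫ x in (0:ℝ)..1, W x ^ q
      = 2 * Real.sqrt ((p+1)/2) * ξ ^ ((2*q - p + 1)/2)
        * ∫ s in (0:ℝ)..1, s ^ q / Real.sqrt (1 - s ^ (p+1)) := by
  have hp1 : 0 < p + 1 := by linarith
  have hW_pos : ∀ x ∈ Ioc (0:ℝ) (1/2), 0 < W x := fun x hx =>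
    h0 ▸ hmono ⟨le_rfl, by norm_num⟩ ⟨hx.1.le, hx.2⟩ hx.1
  have hξ : 0 < ξ := hmax ▸ hW_pos (1/2) ⟨by norm_num, le_rfl⟩
  have hderiv : ∀ x ∈ Ioo (0:ℝ) (1/2),
      HasDerivAt W (Real.sqrt ((2/(p+1)) * (ξ ^ (p+1) - W x ^ (p+1)))) x := fun x hx => by
    rw [← hd x (Ioo_subset_Icc_self hx)]
    exact ((hW.differentiableOn one_ne_zero x ⟨hx.1.le, by linarith [hx.2]⟩).differentiableAt
      (Icc_mem_nhds hx.1 (by linarith [hx.2]))).hasDerivAt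
  have hspeed_pos : ∀ x ∈ Ioo (0:ℝ) (1/2),
      0 < Real.sqrt ((2/(p+1)) * (ξ ^ (p+1) - W x ^ (p+1))) := fun x hx => by
    have hWξ : W x < ξ := hmax ▸ hmono (Ioo_subset_Icc_self hx) ⟨by norm_num, le_rfl⟩ hx.2
    exact Real.sqrt_pos.2 (mul_pos (by positivity)
      (sub_pos.2 (Real.rpow_lt_rpow (hW_pos x (Ioo_subset_Ioc_self hx)).le hWξ hp1)))
  have hint : IntervalIntegrable (fun x => W x ^ q) volume 0 1 :=
    (hW.continuousOn.rpow_const fun _ _ => Or.inr hq).intervalIntegrable_of_Icc zero_le_one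
  calc ∫ x in (0:ℝ)..1, W x ^ q
      = (2:ℝ) • ∫ x in (0:ℝ)..(0 + 1) / 2, W x ^ q :=
        intervalIntegral_eq_two_smul_of_symm hint fun x hx => by
          rw [zero_add, hsym x (uIcc_of_le (zero_le_one' ℝ) ▸ hx)]
    _ = 2 * ∫ u in W 0..W (1/2),
          (Real.sqrt ((2/(p+1)) * (ξ ^ (p+1) - u ^ (p+1))))⁻¹ * u ^ q := by
        rw [zero_add, smul_eq_mul]
        exact congrArg (2 * ·) (integral_comp_eq_integral_inv_smul_of_hasDerivAt (by norm_num)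
          (hW.continuousOn.mono (Icc_subset_Icc le_rfl (by norm_num))) hmono hderiv hspeed_pos
          (fun u => u ^ q))
    _ = _ := by rw [h0, hmax, integral_inv_sqrt_sub_rpow_mul_rpow hp1 q hξ]; ring

theorem stmt2 (p q : ℝ) (hp : 1 < p) (hq : 0 ≤ q) (W : ℝ → ℝ) (ξ : ℝ) (hξ : 0 < ξ)
    (hW : ContDiffOn ℝ 1 W (Set.Icc 0 1))
    (hpos : ∀ x ∈ Set.Ioo (0:ℝ) 1, 0 < W x)
    (hsym : ∀ x ∈ Set.Icc (0:ℝ) 1, W x = W (1 - x))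
    (h0 : W 0 = 0) (h1 : W 1 = 0)
    (hmono : StrictMonoOn W (Set.Icc 0 (1/2)))
    (hmax : W (1/2) = ξ)
    (hd : ∀ x ∈ Set.Icc (0:ℝ) (1/2),
      deriv W x = Real.sqrt ((2/(p+1)) * (ξ ^ (p+1) - W x ^ (p+1)))) :
    ∫ x in (0:ℝ)..1, W x ^ q
      = 2 * Real.sqrt ((p+1)/2) * ξ ^ ((2*q - p + 1)/2)
        * ∫ s in (0:ℝ)..1, s ^ q / Real.sqrt (1 - s ^ (p+1)) :=
  stmt2_general p q hp hq W ξ hW hsym h0 hmono hmax hd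
end

section
/- Let p > 1, q > p, ξ > 0, and let W : [0,1] → ℝ be a C² function with -W'' = W^p on (0,1), W > 0 on (0,1), W(0) = 0, W'(1/2) = 0, W(1/2) = ξ, and (W')² = (2/(p+1))·(ξ^{p+1} − W^{p+1}) on [0,1/2]. Then ∫₀^{1/2} x·W(x)^q dx = (p+1)/(2q-p+1) · [ ξ^{q-p+1}/(q-p+1) + (2(q-p)/(p+1))·ξ^{p+1}·∫₀^{1/2} x·W(x)^{q-p-1} dx ]. -/
/-!
Multiply `-W'' = W ^ p` by `x W ^ (q - p)` and integrate by parts over `[0, 1/2]`: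
`x W ^ (q - p) W' - W ^ (q - p + 1) / (q - p + 1)` is a primitive of
`x ((q - p) W ^ (q - p - 1) W' ^ 2 + W ^ (q - p) W'')`, and the energy identity turns `W' ^ 2`
into `ξ ^ (p + 1)` and `W ^ (p + 1)` terms. The boundary terms vanish at `0` (as `W 0 = 0`) and
reduce to `-ξ ^ (q - p + 1) / (q - p + 1)` at `1/2` (as `W' (1/2) = 0`). The integral with the
possibly negative exponent `q - p - 1` converges because `W` is concave, hence `W x ≥ 2 ξ x`.
-/

open Set MeasureTheory intervalIntegral

lemma ConcaveOn.chord_le {f : ℝ → ℝ} {a b x : ℝ} (hf : ConcaveOn ℝ (Icc a b) f)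
    (hx : x ∈ Icc a b) : (x - a) * (f b - f a) ≤ (b - a) * (f x - f a) := by
  rcases hx.1.eq_or_lt with rfl | hax
  · simp
  have hab : a < b := hax.trans_le hx.2
  have hslope : slope f a b ≤ slope f a x :=
    hf.slope_anti (left_mem_Icc.2 hab.le) ⟨hx, hax.ne'⟩ ⟨right_mem_Icc.2 hab.le, hab.ne'⟩ hx.2
  rw [slope_def_field, slope_def_field, div_le_div_iff₀ (sub_pos.2 hab) (sub_pos.2 hax)] at hslope
  linarith

lemma intervalIntegrable_mul_rpow_of_le {W : ℝ → ℝ} {b c M r : ℝ} (hb : 0 ≤ b) (hc : 0 < c)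
    (hr : 0 ≤ r + 1) (hW : ContinuousOn W (Ioc 0 b)) (hlow : ∀ x ∈ Ioc 0 b, c * x ≤ W x)
    (hup : ∀ x ∈ Ioc 0 b, W x ≤ M) :
    IntervalIntegrable (fun x ↦ x * W x ^ r) volume 0 b := by
  have hWpos : ∀ x ∈ Ioc 0 b, 0 < W x := fun x hx ↦ (mul_pos hc hx.1).trans_le (hlow x hx)
  rw [intervalIntegrable_iff_integrableOn_Ioc_of_le hb]
  refine Integrable.of_bound (C := M ^ (r + 1) / c) ?_ ?_
  · exact (continuousOn_id.mul (hW.rpow_const fun x hx ↦ Or.inl (hWpos x hx).ne')).aestronglyMeasurable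
      measurableSet_Ioc
  · filter_upwards [ae_restrict_mem measurableSet_Ioc] with x hx
    have hWx := hWpos x hx
    rw [Real.norm_of_nonneg (by have := hx.1; positivity)]
    calc x * W x ^ r = x / W x * W x ^ (r + 1) := by rw [Real.rpow_add hWx, Real.rpow_one]; field_simp
      _ ≤ 1 / c * M ^ (r + 1) := by
        refine mul_le_mul ?_ (Real.rpow_le_rpow hWx.le (hup x hx) hr) (by positivity) (by positivity)
        rw [div_le_div_iff₀ hWx hc]
        linarith [hlow x hx]
      _ = M ^ (r + 1) / c := by ring

lemma ConcaveOn.intervalIntegrable_mul_rpow {f : ℝ → ℝ} {b r : ℝ} (hf : ConcaveOn ℝ (Icc 0 b) f)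
    (hfc : ContinuousOn f (Icc 0 b)) (h0 : f 0 = 0) (hb : 0 < b) (hfb : 0 < f b) (hr : 0 ≤ r + 1) :
    IntervalIntegrable (fun x ↦ x * f x ^ r) volume 0 b := by
  obtain ⟨M, hM⟩ := isCompact_Icc.bddAbove_image hfc
  refine intervalIntegrable_mul_rpow_of_le hb.le (div_pos hfb hb) hr (hfc.mono Ioc_subset_Icc_self)
    (fun x hx ↦ ?_) fun x hx ↦ hM (mem_image_of_mem f (Ioc_subset_Icc_self hx))
  have := hf.chord_le (Ioc_subset_Icc_self hx)
  rw [h0, sub_zero, sub_zero, sub_zero, sub_zero] at this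
  rw [div_mul_eq_mul_div, div_le_iff₀ hb]
  linarith

lemma hasDerivAt_mul_rpow_mul_sub {W W' : ℝ → ℝ} {x r w'' : ℝ} (hr : r + 1 ≠ 0) (hWx : W x ≠ 0)
    (hW : HasDerivAt W (W' x) x) (hW' : HasDerivAt W' w'' x) :
    HasDerivAt (fun y ↦ y * W y ^ r * W' y - W y ^ (r + 1) / (r + 1))
      (x * (r * W x ^ (r - 1) * W' x ^ 2 + W x ^ r * w'')) x := by
  have h := (((hasDerivAt_id x).mul (hW.rpow_const (p := r) (Or.inl hWx))).mul hW').sub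
    ((hW.rpow_const (p := r + 1) (Or.inl hWx)).div_const (r + 1))
  refine h.congr_deriv ?_
  simp only [Pi.mul_apply, id_eq, add_sub_cancel_right]
  field_simp
  ring

lemma integral_eq_of_hasDerivAt_mul_rpow {W W' W'' g : ℝ → ℝ} {b r : ℝ} (hb : 0 ≤ b)
    (hr : 0 ≤ r) (hW : ContinuousOn W (Icc 0 b)) (hW' : ContinuousOn W' (Icc 0 b)) (h0 : W 0 = 0)
    (hne : ∀ x ∈ Ioo 0 b, W x ≠ 0) (hderiv : ∀ x ∈ Ioo 0 b, HasDerivAt W (W' x) x)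
    (hderiv' : ∀ x ∈ Ioo 0 b, HasDerivAt W' (W'' x) x)
    (hg : ∀ x ∈ Ioo 0 b, g x = x * (r * W x ^ (r - 1) * W' x ^ 2 + W x ^ r * W'' x))
    (hgi : IntervalIntegrable g volume 0 b) :
    ∫ x in 0..b, g x = b * W b ^ r * W' b - W b ^ (r + 1) / (r + 1) := by
  have hr1 : 0 < r + 1 := by linarith
  rw [integral_eq_sub_of_hasDerivAt_of_le hb
    (f := fun y ↦ y * W y ^ r * W' y - W y ^ (r + 1) / (r + 1)) ?_
    (fun x hx ↦ hg x hx ▸ hasDerivAt_mul_rpow_mul_sub hr1.ne' (hne x hx) (hderiv x hx) (hderiv' x hx))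
    hgi]
  · simp [h0, Real.zero_rpow hr1.ne']
  · exact ((continuousOn_id.mul (hW.rpow_const fun _ _ ↦ Or.inr hr)).mul hW').sub
      ((hW.rpow_const fun _ _ ↦ Or.inr hr1.le).div_const _)

lemma mul_rpow_integrand_eq_of_energy {p q ξ w d x : ℝ} (hp : p + 1 ≠ 0) (hw : 0 < w)
    (hd : d ^ 2 = 2 / (p + 1) * (ξ ^ (p + 1) - w ^ (p + 1))) :
    x * ((q - p) * w ^ (q - p - 1) * d ^ 2 + w ^ (q - p) * -w ^ p)
      = (q - p) * (2 / (p + 1)) * ξ ^ (p + 1) * (x * w ^ (q - p - 1))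
        - (2 * q - p + 1) / (p + 1) * (x * w ^ q) := by
  have h1 : w ^ (q - p - 1) * w ^ (p + 1) = w ^ q := by rw [← Real.rpow_add hw]; ring_nf
  have h2 : w ^ (q - p) * w ^ p = w ^ q := by rw [← Real.rpow_add hw]; ring_nf
  rw [hd]
  field_simp
  linear_combination (-2 * x * (q - p)) * h1 - x * (p + 1) * h2

lemma ContDiffOn.hasDerivAt_of_mem_Ioo {W : ℝ → ℝ} {a b x : ℝ} (hW : ContDiffOn ℝ 2 W (Icc a b))
    (hx : x ∈ Ioo a b) : HasDerivAt W (derivWithin W (Icc a b) x) x := by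
  have hmem : Icc a b ∈ nhds x := Icc_mem_nhds hx.1 hx.2
  rw [derivWithin_of_mem_nhds hmem]
  exact ((hW.differentiableOn (by norm_num)).differentiableAt hmem).hasDerivAt

lemma ContDiffOn.hasDerivAt_derivWithin_of_mem_Ioo {W : ℝ → ℝ} {a b x : ℝ}
    (hW : ContDiffOn ℝ 2 W (Icc a b)) (hx : x ∈ Ioo a b) :
    HasDerivAt (derivWithin W (Icc a b)) (deriv (deriv W) x) x := by
  have hW' : ContDiffOn ℝ 1 (deriv W) (Ioo a b) := by
    simpa using (hW.mono Ioo_subset_Icc_self).deriv_of_isOpen (m := 1) isOpen_Ioo (by norm_num)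
  have heq : derivWithin W (Icc a b) =ᶠ[nhds x] deriv W :=
    Filter.eventually_of_mem (isOpen_Ioo.mem_nhds hx) fun y hy ↦
      derivWithin_of_mem_nhds (Icc_mem_nhds hy.1 hy.2)
  exact (((hW'.differentiableOn (by norm_num)).differentiableAt
    (isOpen_Ioo.mem_nhds hx)).hasDerivAt).congr_of_eventuallyEq heq

theorem stmt12 (p q ξ : ℝ) (hp : 1 < p) (hq : p < q) (hξ : 0 < ξ) (W : ℝ → ℝ)
    (hW : ContDiffOn ℝ 2 W (Set.Icc 0 1))
    (hode : ∀ x ∈ Set.Ioo (0:ℝ) 1, -(deriv (deriv W) x) = W x ^ p)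
    (hpos : ∀ x ∈ Set.Ioo (0:ℝ) 1, 0 < W x)
    (h0 : W 0 = 0) (hd : deriv W (1/2) = 0) (hxi : W (1/2) = ξ)
    (henergy : ∀ x ∈ Set.Icc (0:ℝ) (1/2),
      (deriv W x) ^ 2 = (2/(p+1)) * (ξ ^ (p+1) - W x ^ (p+1))) :
    ∫ x in (0:ℝ)..(1/2), x * W x ^ q
      = (p+1)/(2*q - p + 1)
        * (ξ ^ (q - p + 1)/(q - p + 1)
          + (2*(q - p)/(p+1)) * ξ ^ (p+1) * ∫ x in (0:ℝ)..(1/2), x * W x ^ (q - p - 1)) := by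
  have hsub : Icc (0:ℝ) (1/2) ⊆ Icc 0 1 := Icc_subset_Icc le_rfl (by norm_num)
  have hsubo : Ioo (0:ℝ) (1/2) ⊆ Ioo 0 1 := Ioo_subset_Ioo le_rfl (by norm_num)
  have hconc : ConcaveOn ℝ (Icc (0:ℝ) 1) W := by
    refine (strictConcaveOn_of_deriv2_neg (convex_Icc 0 1) hW.continuousOn fun x hx ↦ ?_).concaveOn
    rw [interior_Icc] at hx
    simp only [Function.iterate_succ, Function.iterate_zero, Function.comp_apply, id]
    linarith [hode x hx, Real.rpow_pos_of_pos (hpos x hx) p]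
  have hI2 : IntervalIntegrable (fun x ↦ x * W x ^ (q - p - 1)) volume 0 (1/2) :=
    (hconc.subset hsub (convex_Icc _ _)).intervalIntegrable_mul_rpow (hW.continuousOn.mono hsub) h0
      (by norm_num) (hxi ▸ hξ) (by linarith)
  have hI3 : IntervalIntegrable (fun x ↦ x * W x ^ q) volume 0 (1/2) :=
    (continuousOn_id.mul ((hW.continuousOn.mono hsub).rpow_const fun _ _ ↦ Or.inr (by linarith))
      ).intervalIntegrable_of_Icc (by norm_num)
  have key := integral_eq_of_hasDerivAt_mul_rpow (r := q - p)
    (g := fun x ↦ (q - p) * (2 / (p + 1)) * ξ ^ (p + 1) * (x * W x ^ (q - p - 1))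
      - (2 * q - p + 1) / (p + 1) * (x * W x ^ q))
    (by norm_num) (by linarith) (hW.continuousOn.mono hsub)
    ((hW.continuousOn_derivWithin (uniqueDiffOn_Icc one_pos) one_le_two).mono hsub) h0
    (fun x hx ↦ (hpos x (hsubo hx)).ne') (fun x hx ↦ hW.hasDerivAt_of_mem_Ioo (hsubo hx))
    (fun x hx ↦ hW.hasDerivAt_derivWithin_of_mem_Ioo (hsubo hx))
    (fun x hx ↦ by
      rw [derivWithin_of_mem_nhds (Icc_mem_nhds (hsubo hx).1 (hsubo hx).2),
        neg_eq_iff_eq_neg.mp (hode x (hsubo hx))]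
      exact (mul_rpow_integrand_eq_of_energy (by linarith) (hpos x (hsubo hx))
        (henergy x (Ioo_subset_Icc_self hx))).symm)
    ((hI2.const_mul _).sub (hI3.const_mul _))
  rw [intervalIntegral.integral_sub (hI2.const_mul _) (hI3.const_mul _),
    intervalIntegral.integral_const_mul, intervalIntegral.integral_const_mul, hxi,
    derivWithin_of_mem_nhds (Icc_mem_nhds (by norm_num) (by norm_num)), hd] at key
  have hq1 : q - p + 1 ≠ 0 := by linarith
  have hq2 : 2 * q - p + 1 ≠ 0 := by linarith
  rw [div_mul_eq_mul_div, eq_div_iff hq2]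
  field_simp at key ⊢
  linear_combination (-1 / 2 : ℝ) * key
end

section
/- Let p > 1, ξ > 0, and let W : [0,1] → ℝ be a C² function with -W'' = W^p on (0,1), W > 0 on (0,1), W(x) = W(1-x) for all x, W(0) = W(1) = 0, W'(1/2) = 0, W(1/2) = ξ, W' > 0 on [0,1/2), and (W')² = (2/(p+1))·(ξ^{p+1} − W^{p+1}) on [0,1/2]. Define L_{p,1} := ∫₀¹ s/sqrt(1−s^{p+1}) ds. Then ∫₀¹ (1-x)³·W(x)^p dx = sqrt(2/(p+1))·ξ^{(p+1)/2} − 3·sqrt(2(p+1))·ξ^{(3-p)/2}·L_{p,1}. -/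
/-!
By the symmetry `W x = W (1 - x)` the integral equals `∫₀^{1/2} q W^p` with `q = (1 - x)³ + x³`.
As `W^p = -W''`, `q'' = 6`, `q'(1/2) = 0` and `W 0 = W'(1/2) = 0`, integrating by parts twice gives
`W'(0) - 6 ∫₀^{1/2} W`. At `x = 0` the energy identity gives `W'(0) = √(2/(p+1)) ξ^{(p+1)/2}`, and
in general the first-order equation `W' = W'(0) √(1 - (W/ξ)^{p+1})` on `[0, 1/2]`, so the
substitution `s = W x / ξ` evaluates `∫₀^{1/2} W = ξ² / W'(0) · L_{p,1}`.
-/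

open Set MeasureTheory intervalIntegral

theorem intervalIntegral.integral_eq_integral_midpoint_add_comp_sub {f : ℝ → ℝ} {a b : ℝ}
    (hf : IntervalIntegrable f volume a b) :
    ∫ x in a..b, f x = ∫ x in a..(a + b) / 2, (f x + f (a + b - x)) := by
  have hmid : (a + b) / 2 ∈ uIcc a b := by
    rcases le_total a b with h | h
    · rw [uIcc_of_le h]; constructor <;> linarith
    · rw [uIcc_of_ge h]; constructor <;> linarith
  have hleft : IntervalIntegrable f volume a ((a + b) / 2) :=
    hf.mono_set (uIcc_subset_uIcc left_mem_uIcc hmid)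
  have hright : IntervalIntegrable f volume ((a + b) / 2) b :=
    hf.mono_set (uIcc_subset_uIcc hmid right_mem_uIcc)
  have hreflect : ∫ x in a..(a + b) / 2, f (a + b - x) = ∫ x in (a + b) / 2..b, f x := by
    rw [integral_comp_sub_left]; congr 1 <;> ring
  have hreflect_int : IntervalIntegrable (fun x => f (a + b - x)) volume a ((a + b) / 2) := by
    rw [IntervalIntegrable.symm_iff]
    convert hright.comp_sub_left (a + b) using 2 <;> ring
  rw [integral_add hleft hreflect_int, hreflect, integral_add_adjacent_intervals hleft hright]

theorem integral_one_sub_pow_mul_of_symm (n : ℕ) {g : ℝ → ℝ} (hg : ContinuousOn g (Icc 0 1))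
    (hsymm : ∀ x ∈ Icc (0 : ℝ) 1, g x = g (1 - x)) :
    ∫ x in (0 : ℝ)..1, (1 - x) ^ n * g x = ∫ x in (0 : ℝ)..1 / 2, ((1 - x) ^ n + x ^ n) * g x := by
  rw [integral_eq_integral_midpoint_add_comp_sub (f := fun x => (1 - x) ^ n * g x)
    (((continuous_const.sub continuous_id).pow n).continuousOn.mul hg
      |>.intervalIntegrable_of_Icc zero_le_one), zero_add]
  refine integral_congr fun x hx => ?_
  rw [uIcc_of_le (by norm_num)] at hx
  simp only [sub_sub_cancel, ← hsymm x ⟨hx.1, hx.2.trans (by norm_num)⟩]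
  ring

theorem integral_cube_add_cube_mul_eq {W W' f : ℝ → ℝ}
    (hW : ContinuousOn W (Icc 0 (1 / 2))) (hW' : ContinuousOn W' (Icc 0 (1 / 2)))
    (hf : ContinuousOn f (Icc 0 (1 / 2)))
    (hderiv : ∀ x ∈ Ioo (0 : ℝ) (1 / 2), HasDerivAt W (W' x) x)
    (hderiv2 : ∀ x ∈ Ioo (0 : ℝ) (1 / 2), HasDerivAt W' (-f x) x)
    (h0 : W 0 = 0) (h1 : W' (1 / 2) = 0) :
    ∫ x in (0 : ℝ)..1 / 2, ((1 - x) ^ 3 + x ^ 3) * f x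
      = W' 0 - 6 * ∫ x in (0 : ℝ)..1 / 2, W x := by
  have hq : ContinuousOn (fun x : ℝ => (1 - x) ^ 3 + x ^ 3) (Icc 0 (1 / 2)) := by fun_prop
  have hint : ∀ {g : ℝ → ℝ}, ContinuousOn g (Icc 0 (1 / 2)) →
      IntervalIntegrable g volume 0 (1 / 2) := fun hg =>
    hg.intervalIntegrable_of_Icc (by norm_num)
  have hFTC : ∫ x in (0 : ℝ)..1 / 2, (((1 - x) ^ 3 + x ^ 3) * f x + 6 * W x) = W' 0 := by
    rw [integral_eq_sub_of_hasDerivAt_of_le (by norm_num)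
      (f := fun x => -(((1 - x) ^ 3 + x ^ 3) * W' x) + (6 * x - 3) * W x)
      (f' := fun x => ((1 - x) ^ 3 + x ^ 3) * f x + 6 * W x)
      ((hq.mul hW').neg.add ((by fun_prop : Continuous fun x : ℝ => 6 * x - 3).continuousOn.mul hW))
      (fun x hx => ?_) (hint ((hq.mul hf).add (continuousOn_const.mul hW)))]
    · norm_num [h0, h1]
    · have hq' : HasDerivAt (fun y : ℝ => (1 - y) ^ 3 + y ^ 3) (6 * x - 3) x :=
        ((((hasDerivAt_id' x).const_sub 1).fun_pow 3).fun_add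
          ((hasDerivAt_id' x).fun_pow 3)).congr_deriv (by norm_num; ring)
      exact (((hq'.fun_mul (hderiv2 x hx)).fun_neg).fun_add
        ((((hasDerivAt_id' x).const_mul 6).sub_const 3).fun_mul (hderiv x hx))).congr_deriv
        (by ring)
  rw [integral_add (hint (g := fun x => ((1 - x) ^ 3 + x ^ 3) * f x) (hq.mul hf))
    ((hint hW).const_mul 6), intervalIntegral.integral_const_mul] at hFTC
  linarith

theorem integral_comp_eq_integral_div_of_hasDerivAt {V G φ : ℝ → ℝ} {a b : ℝ} (hab : a ≤ b)
    (hV : ContinuousOn V (Icc a b)) (hV' : ∀ x ∈ Ioo a b, HasDerivAt V (G (V x)) x)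
    (hG : ∀ x ∈ Ioo a b, 0 < G (V x)) :
    ∫ x in a..b, φ (V x) = ∫ u in V a..V b, φ u / G u := by
  rw [← integral_deriv_smul_comp_of_deriv_nonneg (f' := fun x => G (V x))
    (by rwa [uIcc_of_le hab]) (by simpa [hab] using hV')
    (by simpa [hab] using fun x hx => (hG x hx).le),
    integral_of_le hab, integral_of_le hab, integral_Ioc_eq_integral_Ioo,
    integral_Ioc_eq_integral_Ioo]
  refine setIntegral_congr_fun measurableSet_Ioo fun x hx => ?_
  simp only [Function.comp_apply, smul_eq_mul]
  field_simp [(hG x hx).ne']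

theorem integral_eq_sq_div_mul_integral_div_sqrt {W W' : ℝ → ℝ} {a b k r ξ : ℝ} (hab : a ≤ b)
    (hξ : 0 < ξ) (hk : k ≠ 0) (hW : ContinuousOn W (Icc a b))
    (hderiv : ∀ x ∈ Ioo a b, HasDerivAt W (W' x) x) (hW'pos : ∀ x ∈ Ioo a b, 0 < W' x)
    (hprofile : ∀ x ∈ Ioo a b, W' x = k * √(1 - (W x / ξ) ^ r)) (ha : W a = 0) (hb : W b = ξ) :
    ∫ x in a..b, W x = ξ ^ 2 / k * ∫ s in (0 : ℝ)..1, s / √(1 - s ^ r) := by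
  have h := integral_comp_eq_integral_div_of_hasDerivAt (φ := id)
    (G := fun s => k / ξ * √(1 - s ^ r)) hab (hW.div_const ξ)
    (fun x hx => ((hderiv x hx).div_const ξ).congr_deriv (by rw [hprofile x hx]; ring))
    (fun x hx => by rw [← mul_div_right_comm, ← hprofile x hx]; exact div_pos (hW'pos x hx) hξ)
  simp only [id, ha, hb, zero_div, div_self hξ.ne', intervalIntegral.integral_div,
    div_mul_eq_div_div_swap] at h
  rw [div_eq_iff hξ.ne'] at h
  rw [h]
  field_simp

theorem eq_mul_sqrt_one_sub_div_rpow {c ξ r w d d₀ : ℝ} (hξ : 0 < ξ) (hw : 0 ≤ w) (hd : 0 ≤ d)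
    (hd₀ : 0 < d₀) (h₀ : d₀ ^ 2 = c * ξ ^ r) (h : d ^ 2 = c * (ξ ^ r - w ^ r)) :
    d = d₀ * √(1 - (w / ξ) ^ r) := by
  have hsq : 1 - (w / ξ) ^ r = (d / d₀) ^ 2 := by
    rw [div_pow, eq_div_iff (by positivity), h, h₀, Real.div_rpow hw hξ.le]
    field_simp [(Real.rpow_pos_of_pos hξ r).ne']
  rw [hsq, Real.sqrt_sq (by positivity)]
  field_simp

theorem eq_sqrt_mul_rpow_of_sq_eq {c ξ r d : ℝ} (hξ : 0 ≤ ξ) (hc : 0 ≤ c) (hd : 0 ≤ d)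
    (h : d ^ 2 = c * ξ ^ r) : d = √c * ξ ^ (r / 2) := by
  rw [← Real.sqrt_sq hd, h, Real.sqrt_mul hc, Real.sqrt_eq_rpow (ξ ^ r), ← Real.rpow_mul hξ,
    mul_one_div]

theorem ContDiffOn.hasDerivAt_deriv_of_isOpen {f : ℝ → ℝ} {s : Set ℝ} {x : ℝ}
    (hf : ContDiffOn ℝ 2 f s) (hs : IsOpen s) (hx : x ∈ s) :
    HasDerivAt (deriv f) (deriv (deriv f) x) x :=
  (((hf.deriv_of_isOpen hs (by norm_num)).differentiableOn one_ne_zero).differentiableAt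
    (hs.mem_nhds hx)).hasDerivAt

theorem six_mul_sq_div_sqrt_mul_rpow {p ξ : ℝ} (hp : 0 < p + 1) (hξ : 0 < ξ) :
    6 * ξ ^ 2 / (√(2 / (p + 1)) * ξ ^ ((p + 1) / 2)) = 3 * √(2 * (p + 1)) * ξ ^ ((3 - p) / 2) := by
  have hsqrt : √(2 * (p + 1)) * √(2 / (p + 1)) = 2 := by
    rw [← Real.sqrt_mul (by positivity), show 2 * (p + 1) * (2 / (p + 1)) = 2 ^ 2 by field_simp,
      Real.sqrt_sq zero_le_two]
  have hpow : ξ ^ ((3 - p) / 2) * ξ ^ ((p + 1) / 2) = ξ ^ 2 := by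
    rw [← Real.rpow_add hξ, show (3 - p) / 2 + (p + 1) / 2 = (2 : ℕ) by push_cast; ring,
      Real.rpow_natCast]
  rw [div_eq_iff (by positivity)]
  linear_combination (-3 * (ξ ^ ((3 - p) / 2) * ξ ^ ((p + 1) / 2))) * hsqrt - 6 * hpow

theorem stmt14_general (p ξ : ℝ) (hp : 1 < p) (hξ : 0 < ξ) (W : ℝ → ℝ)
    (hW : ContDiffOn ℝ 2 W (Set.Icc 0 1))
    (hode : ∀ x ∈ Set.Ioo (0:ℝ) 1, -(deriv (deriv W) x) = W x ^ p)
    (hpos : ∀ x ∈ Set.Ioo (0:ℝ) 1, 0 < W x)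
    (hsym : ∀ x ∈ Set.Icc (0:ℝ) 1, W x = W (1 - x))
    (h0 : W 0 = 0)
    (hd : deriv W (1/2) = 0) (hxi : W (1/2) = ξ)
    (hd' : ∀ x ∈ Set.Ico (0:ℝ) (1/2), 0 < deriv W x)
    (henergy : ∀ x ∈ Set.Icc (0:ℝ) (1/2),
      (deriv W x) ^ 2 = (2/(p+1)) * (ξ ^ (p+1) - W x ^ (p+1))) :
    ∫ x in (0:ℝ)..1, (1 - x) ^ 3 * W x ^ p
      = Real.sqrt (2/(p+1)) * ξ ^ ((p+1)/2)
        - 3 * Real.sqrt (2*(p+1)) * ξ ^ ((3 - p)/2)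
          * ∫ s in (0:ℝ)..1, s / Real.sqrt (1 - s ^ (p+1)) := by
  have hp1 : 0 < p + 1 := by linarith
  have hWc : ContinuousOn W (Icc 0 (1 / 2)) :=
    hW.continuousOn.mono (Icc_subset_Icc_right (by norm_num))
  have hWpow : ContinuousOn (fun x => W x ^ p) (Icc 0 1) :=
    hW.continuousOn.rpow_const fun _ _ => Or.inr (by linarith)
  have hIoo : Ioo (0 : ℝ) (1 / 2) ⊆ Ioo 0 1 := Ioo_subset_Ioo_right (by norm_num)
  have hD₀ : 0 < deriv W 0 := hd' 0 ⟨le_rfl, by norm_num⟩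
  have hD₀sq : deriv W 0 ^ 2 = 2 / (p + 1) * ξ ^ (p + 1) := by
    simpa [h0, Real.zero_rpow hp1.ne'] using henergy 0 ⟨le_rfl, by norm_num⟩
  have hprofile :
      ∀ x ∈ Icc (0 : ℝ) (1 / 2), deriv W x = deriv W 0 * √(1 - (W x / ξ) ^ (p + 1)) := by
    rintro x ⟨hx0, hx1⟩
    refine eq_mul_sqrt_one_sub_div_rpow hξ ?_ ?_ hD₀ hD₀sq (henergy x ⟨hx0, hx1⟩)
    · rcases hx0.eq_or_lt with rfl | hx0
      exacts [h0.ge, (hpos x ⟨hx0, by linarith⟩).le]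
    · rcases hx1.eq_or_lt with rfl | hx1
      exacts [hd.ge, (hd' x ⟨hx0, hx1⟩).le]
  have hderiv : ∀ x ∈ Ioo (0 : ℝ) 1, HasDerivAt W (deriv W x) x := fun x hx =>
    (((hW.mono Ioo_subset_Icc_self).differentiableOn (by norm_num)).differentiableAt
      (isOpen_Ioo.mem_nhds hx)).hasDerivAt
  have hW'c : ContinuousOn (deriv W) (Icc 0 (1 / 2)) :=
    (continuousOn_const.mul ((continuousOn_const.sub
      ((hWc.div_const ξ).rpow_const fun _ _ => Or.inr hp1.le)).sqrt)).congr hprofile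
  have hgreen := integral_cube_add_cube_mul_eq hWc hW'c
    (hWpow.mono (Icc_subset_Icc_right (by norm_num))) (fun x hx => hderiv x (hIoo hx))
    (fun x hx => ((hW.mono Ioo_subset_Icc_self).hasDerivAt_deriv_of_isOpen isOpen_Ioo
      (hIoo hx)).congr_deriv (by rw [← hode x (hIoo hx), neg_neg])) h0 hd
  have hsubst := integral_eq_sq_div_mul_integral_div_sqrt (by norm_num) hξ hD₀.ne' hWc
    (fun x hx => hderiv x (hIoo hx)) (fun x hx => hd' x (Ioo_subset_Ico_self hx))
    (fun x hx => hprofile x (Ioo_subset_Icc_self hx)) h0 hxi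
  rw [integral_one_sub_pow_mul_of_symm 3 hWpow (fun x hx => by rw [← hsym x hx]), hgreen, hsubst,
    eq_sqrt_mul_rpow_of_sq_eq hξ.le (by positivity) hD₀.le hD₀sq,
    ← six_mul_sq_div_sqrt_mul_rpow hp1 hξ]
  ring

theorem stmt14 (p ξ : ℝ) (hp : 1 < p) (hξ : 0 < ξ) (W : ℝ → ℝ)
    (hW : ContDiffOn ℝ 2 W (Set.Icc 0 1))
    (hode : ∀ x ∈ Set.Ioo (0:ℝ) 1, -(deriv (deriv W) x) = W x ^ p)
    (hpos : ∀ x ∈ Set.Ioo (0:ℝ) 1, 0 < W x)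
    (hsym : ∀ x ∈ Set.Icc (0:ℝ) 1, W x = W (1 - x))
    (h0 : W 0 = 0) (h1 : W 1 = 0)
    (hd : deriv W (1/2) = 0) (hxi : W (1/2) = ξ)
    (hd' : ∀ x ∈ Set.Ico (0:ℝ) (1/2), 0 < deriv W x)
    (henergy : ∀ x ∈ Set.Icc (0:ℝ) (1/2),
      (deriv W x) ^ 2 = (2/(p+1)) * (ξ ^ (p+1) - W x ^ (p+1))) :
    ∫ x in (0:ℝ)..1, (1 - x) ^ 3 * W x ^ p
      = Real.sqrt (2/(p+1)) * ξ ^ ((p+1)/2)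
        - 3 * Real.sqrt (2*(p+1)) * ξ ^ ((3 - p)/2)
          * ∫ s in (0:ℝ)..1, s / Real.sqrt (1 - s ^ (p+1)) :=
  stmt14_general p ξ hp hξ W hW hode hpos hsym h0 hd hxi hd' henergy
end

section
/- Let p > 1, ξ > 0, and let W : [0,1] → ℝ be C¹ with W(0) = 0, W(1/2) = ξ, W strictly increasing on [0,1/2], and W'(x) = sqrt((2/(p+1))·(ξ^{p+1} − W(x)^{p+1})) on [0,1/2). Define L_{p,1} := ∫₀¹ s/sqrt(1−s^{p+1}) ds. Then ∫₀^{1/2} W(x) dx = sqrt((p+1)/2)·ξ^{(3-p)/2}·L_{p,1}. -/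
/-!
Substituting `u = W x` turns `∫₀^{1/2} W` into `∫₀^ξ u / W'(W⁻¹ u) du`, and by the ODE the
denominator is `√(2/(p+1) · (ξ^(p+1) - u^(p+1)))`, a function of `u` alone; no integrability is
needed since the one-dimensional change of variables holds for injective maps with a derivative.
The further substitution `u = ξ s` then factors out the power of `ξ`.
-/

open Set MeasureTheory Real

namespace intervalIntegral

theorem integral_abs_deriv_smul_comp_of_strictMonoOn {E : Type*}
    [NormedAddCommGroup E] [NormedSpace ℝ E] {f f' : ℝ → ℝ} {a b : ℝ} (hab : a ≤ b)
    (hf : ContinuousOn f (Icc a b)) (hmono : StrictMonoOn f (Icc a b))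
    (hf' : ∀ x ∈ Ico a b, HasDerivWithinAt f (f' x) (Ico a b) x) (g : ℝ → E) :
    ∫ x in a..b, |f' x| • g (f x) = ∫ u in f a..f b, g u := by
  have hfab : f a ≤ f b := hmono.monotoneOn (left_mem_Icc.2 hab) (right_mem_Icc.2 hab) hab
  rw [integral_of_le hab, integral_of_le hfab, integral_Ioc_eq_integral_Ioo,
    integral_Ioc_eq_integral_Ioo, ← integral_Ico_eq_integral_Ioo, ← integral_Ico_eq_integral_Ioo,
    ← hf.image_Ico_of_strictMonoOn hab hmono,
    integral_image_eq_integral_abs_deriv_smul measurableSet_Ico hf'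
      (hmono.injOn.mono Ico_subset_Icc_self)]

theorem integral_div_sqrt_mul_sub_rpow {ξ c : ℝ} (hξ : 0 < ξ) (hc : 0 ≤ c) (q : ℝ) :
    ∫ u in 0..ξ, u / √(c * (ξ ^ q - u ^ q))
      = ξ ^ (2 - q / 2) / √c * ∫ s in 0..1, s / √(1 - s ^ q) := by
  have hscale : EqOn (fun u => u / √(c * (ξ ^ q - u ^ q)))
      (fun u => ξ ^ (1 - q / 2) / √c * ((u / ξ) / √(1 - (u / ξ) ^ q))) (uIcc 0 ξ) := by
    intro u hu
    rw [uIcc_of_le hξ.le] at hu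
    have hsplit : ξ ^ q - u ^ q = ξ ^ q * (1 - (u / ξ) ^ q) := by
      rw [div_rpow hu.1 hξ.le, mul_sub, mul_div_cancel₀ _ (rpow_pos_of_pos hξ q).ne', mul_one]
    have hsqrt : √(ξ ^ q) = ξ ^ (q / 2) := by
      rw [sqrt_eq_rpow, ← rpow_mul hξ.le]
      ring_nf
    have hpow : ξ ^ (1 - q / 2) = ξ / ξ ^ (q / 2) := by
      rw [eq_div_iff (rpow_pos_of_pos hξ _).ne', ← rpow_add hξ]
      norm_num
    dsimp only
    rw [hsplit, sqrt_mul hc, sqrt_mul (rpow_nonneg hξ.le q), hsqrt, hpow]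
    field_simp
  rw [integral_congr hscale, integral_const_mul,
    integral_comp_div (fun s => s / √(1 - s ^ q)) hξ.ne', zero_div, div_self hξ.ne',
    smul_eq_mul, ← mul_assoc, div_mul_eq_mul_div, ← rpow_add_one hξ.ne']
  ring_nf

end intervalIntegral

open intervalIntegral in
theorem stmt15 (p ξ : ℝ) (hp : 1 < p) (hξ : 0 < ξ) (W : ℝ → ℝ)
    (hW : ContDiffOn ℝ 1 W (Set.Icc 0 1))
    (h0 : W 0 = 0) (hxi : W (1/2) = ξ)
    (hmono : StrictMonoOn W (Set.Icc 0 (1/2)))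
    (hd : ∀ x ∈ Set.Ico (0:ℝ) (1/2),
      deriv W x = Real.sqrt ((2/(p+1)) * (ξ ^ (p+1) - W x ^ (p+1)))) :
    ∫ x in (0:ℝ)..(1/2), W x
      = Real.sqrt ((p+1)/2) * ξ ^ ((3 - p)/2)
        * ∫ s in (0:ℝ)..1, s / Real.sqrt (1 - s ^ (p+1)) := by
  have hp1 : 0 < p + 1 := by linarith
  have hspeed_pos (x : ℝ) (hx : x ∈ Ico (0:ℝ) (1/2)) :
      0 < √(2 / (p + 1) * (ξ ^ (p + 1) - W x ^ (p + 1))) := by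
    have hWx : 0 ≤ W x :=
      h0 ▸ hmono.monotoneOn (left_mem_Icc.2 (by norm_num)) (Ico_subset_Icc_self hx) hx.1
    have hWξ : W x < ξ :=
      hxi ▸ hmono (Ico_subset_Icc_self hx) (right_mem_Icc.2 (by norm_num)) hx.2
    have := rpow_lt_rpow hWx hWξ hp1
    exact sqrt_pos.2 (mul_pos (by positivity) (by linarith))
  have hderiv (x : ℝ) (hx : x ∈ Ico (0:ℝ) (1/2)) : HasDerivAt W (deriv W x) x :=
    (differentiableAt_of_deriv_ne_zero (hd x hx ▸ (hspeed_pos x hx).ne')).hasDerivAt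
  have hsubst := integral_abs_deriv_smul_comp_of_strictMonoOn (by norm_num)
    (hW.continuousOn.mono (Icc_subset_Icc_right (by norm_num))) hmono
    (fun x hx => (hderiv x hx).hasDerivWithinAt)
    fun u => u / √(2 / (p + 1) * (ξ ^ (p + 1) - u ^ (p + 1)))
  rw [h0, hxi, integral_div_sqrt_mul_sub_rpow hξ (by positivity)] at hsubst
  have hintegrand : ∫ x in (0:ℝ)..(1/2), W x = ∫ x in (0:ℝ)..(1/2),
      |deriv W x| • (W x / √(2 / (p + 1) * (ξ ^ (p + 1) - W x ^ (p + 1)))) := by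
    refine integral_congr_ae ?_
    filter_upwards [Measure.ae_ne volume (1/2 : ℝ)] with x hne hx
    rw [uIoc_of_le (by norm_num)] at hx
    have hx' : x ∈ Ico (0:ℝ) (1/2) := ⟨hx.1.le, lt_of_le_of_ne hx.2 hne⟩
    rw [hd x hx', abs_of_pos (hspeed_pos x hx'), smul_eq_mul,
      mul_div_cancel₀ _ (hspeed_pos x hx').ne']
  rw [hintegrand, hsubst, div_eq_mul_inv, ← sqrt_inv, inv_div, mul_comm (ξ ^ _)]
  ring_nf
end
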